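/- Take α = 1 (so the X_i are i.i.d. exponential of rate 1). Then for every integer m with 2 ≤ m ≤ n, γ_{m−1} = Σ_{k=0}^∞ (−Δ)^k γ_m, where (−Δ)^k γ_m = Σ_{i=0}^{k} (−1)^i binom(k,i) γ_{m+i}; equivalently, for every integer m with 1 ≤ m ≤ n−1, γ_m = γ_n + Σ_{k=1}^∞ p_{1,n,k} · (n−m)_k / (n)_k. -/

import Mathlib

/-!
By Cauchy–Schwarz, `0 < C ≤ 1` almost surely, so `1 - C` lies in `[0, 1)` and both identities
are integrated power series in `1 - C`: the geometric series `c^(m-1) = ∑ₖ (1-c)^k c^m` and the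
negative binomial series `c^m = ∑ₖ (n-m)_k / k! · (1-c)^k c^n`. All terms are nonnegative, so the
series may be integrated termwise, and expanding `(1-c)^k` binomially turns
`∫ (1-C)^k C^r` into the iterated difference `(-Δ)^k γ_r`.
-/

open MeasureTheory ProbabilityTheory Real

/-- The Pochhammer symbol `(c)_k = c (c+1) ⋯ (c+k−1)` for a real `c`. -/
noncomputable def poch (c : ℝ) (k : ℕ) : ℝ := ∏ i ∈ Finset.range k, (c + i)

open Finset Nat

lemma poch_pos {c : ℝ} (hc : 0 < c) (k : ℕ) : 0 < poch c k :=
  prod_pos fun i _ => by positivity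

lemma poch_natCast (a k : ℕ) : poch a k = a.ascFactorial k := by
  simp [poch, ascFactorial_eq_prod_range]

lemma poch_natCast_succ_div_factorial (j k : ℕ) :
    poch ((j + 1 : ℕ) : ℝ) k / k ! = (k + j).choose j := by
  rw [poch_natCast, ascFactorial_eq_factorial_mul_choose, add_comm j k, choose_symm_add]
  push_cast
  field_simp

lemma hasSum_poch_div_factorial_mul_pow (j : ℕ) {x : ℝ} (hx : |x| < 1) :
    HasSum (fun k => poch ((j + 1 : ℕ) : ℝ) k / k ! * x ^ k) (1 / (1 - x) ^ (j + 1)) := by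
  simp_rw [poch_natCast_succ_div_factorial]
  exact hasSum_choose_mul_geometric_of_norm_lt_one j hx

lemma abs_one_sub_lt_one {c : ℝ} (hc0 : 0 < c) (hc2 : c < 2) : |1 - c| < 1 :=
  abs_lt.2 ⟨by linarith, by linarith⟩

lemma hasSum_one_sub_pow_mul_rpow {c : ℝ} (hc0 : 0 < c) (hc2 : c < 2) (r : ℝ) :
    HasSum (fun k : ℕ => (1 - c) ^ k * c ^ r) (c ^ (r - 1)) := by
  have h := (hasSum_geometric_of_abs_lt_one (abs_one_sub_lt_one hc0 hc2)).mul_right (c ^ r)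
  rwa [sub_sub_cancel, ← div_eq_inv_mul, ← rpow_sub_one hc0.ne'] at h

lemma hasSum_poch_div_factorial_mul_one_sub_pow_mul_pow {c : ℝ} (hc0 : 0 < c) (hc2 : c < 2)
    (m j : ℕ) :
    HasSum (fun k => poch ((j + 1 : ℕ) : ℝ) k / k ! * (1 - c) ^ k * c ^ (m + j + 1)) (c ^ m) := by
  have h := (hasSum_poch_div_factorial_mul_pow j (abs_one_sub_lt_one hc0 hc2)).mul_right
    (c ^ (m + j + 1))
  have hval : 1 / (1 - (1 - c)) ^ (j + 1) * c ^ (m + j + 1) = c ^ m := by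
    rw [sub_sub_cancel]
    field_simp
    ring
  rwa [hval] at h

lemma one_sub_pow_mul_rpow_eq_sum {c : ℝ} (hc : 0 < c) (k : ℕ) (r : ℝ) :
    (1 - c) ^ k * c ^ r = ∑ i ∈ range (k + 1), (-1 : ℝ) ^ i * k.choose i * c ^ (r + i) := by
  rw [sub_eq_add_neg, add_comm, add_pow, sum_mul]
  refine sum_congr rfl fun i _ => ?_
  rw [rpow_add hc, rpow_natCast, neg_pow, one_pow]
  ring

theorem hasSum_integral_of_nonneg {Ω ι : Type*} [MeasurableSpace Ω] {μ : Measure Ω}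
    [Countable ι] {F : ι → Ω → ℝ} {f : Ω → ℝ} (hF : ∀ k, AEStronglyMeasurable (F k) μ)
    (hF0 : ∀ k, 0 ≤ᵐ[μ] F k) (hf : Integrable f μ)
    (h_lim : ∀ᵐ ω ∂μ, HasSum (fun k => F k ω) (f ω)) :
    HasSum (fun k => ∫ ω, F k ω ∂μ) (∫ ω, f ω ∂μ) := by
  refine hasSum_integral_of_dominated_convergence F hF (fun k => ?_)
    (h_lim.mono fun _ h => h.summable) (hf.congr ?_) h_lim
  · filter_upwards [hF0 k] with ω h using (norm_of_nonneg h).le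
  · filter_upwards [h_lim] with ω h using h.tsum_eq.symm

section UnitInterval

variable {Ω : Type*} [MeasurableSpace Ω] {μ : Measure Ω} [IsProbabilityMeasure μ] {C : Ω → ℝ}
  (hC : AEMeasurable C μ) (hC01 : ∀ᵐ ω ∂μ, C ω ∈ Set.Ioc 0 1)
include hC hC01

lemma integrable_one_sub_pow_mul_rpow (k : ℕ) {r : ℝ} (hr : 0 ≤ r) :
    Integrable (fun ω => (1 - C ω) ^ k * C ω ^ r) μ := by
  refine .of_bound (by fun_prop) 1 ?_
  filter_upwards [hC01] with ω ⟨h0, h1⟩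
  have : 0 ≤ 1 - C ω := by linarith
  rw [norm_of_nonneg (by positivity)]
  exact mul_le_one₀ (pow_le_one₀ this (by linarith)) (by positivity) (rpow_le_one h0.le h1 hr)

lemma integrable_rpow {r : ℝ} (hr : 0 ≤ r) : Integrable (fun ω => C ω ^ r) μ := by
  simpa using integrable_one_sub_pow_mul_rpow hC hC01 0 hr

lemma integral_one_sub_pow_mul_rpow (k : ℕ) {r : ℝ} (hr : 0 ≤ r) :
    ∫ ω, (1 - C ω) ^ k * C ω ^ r ∂μ
      = ∑ i ∈ range (k + 1), (-1 : ℝ) ^ i * k.choose i * ∫ ω, C ω ^ (r + i) ∂μ := by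
  have hint (i : ℕ) : Integrable (fun ω => C ω ^ (r + i)) μ :=
    integrable_rpow hC hC01 (by positivity)
  simp_rw [← integral_const_mul]
  rw [← integral_finsetSum _ fun i _ => (hint i).const_mul _]
  refine integral_congr_ae ?_
  filter_upwards [hC01] with ω hω using one_sub_pow_mul_rpow_eq_sum hω.1 k r

lemma hasSum_integral_one_sub_pow_mul_rpow {r : ℝ} (hr : 1 ≤ r) :
    HasSum (fun k : ℕ => ∫ ω, (1 - C ω) ^ k * C ω ^ r ∂μ) (∫ ω, C ω ^ (r - 1) ∂μ) := by
  refine hasSum_integral_of_nonneg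
    (fun k => (integrable_one_sub_pow_mul_rpow hC hC01 k (by linarith)).1) (fun k => ?_)
    (integrable_rpow hC hC01 (by linarith)) ?_
  · filter_upwards [hC01] with ω ⟨h0, h1⟩
    have : 0 ≤ 1 - C ω := by linarith
    positivity
  · filter_upwards [hC01] with ω ⟨h0, h1⟩ using hasSum_one_sub_pow_mul_rpow h0 (by linarith) r

lemma hasSum_poch_div_factorial_mul_integral (m j : ℕ) :
    HasSum (fun k => poch ((j + 1 : ℕ) : ℝ) k / k ! *
      ∫ ω, (1 - C ω) ^ k * C ω ^ ((m + j + 1 : ℕ) : ℝ) ∂μ) (∫ ω, C ω ^ (m : ℝ) ∂μ) := by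
  simp_rw [← integral_const_mul]
  refine hasSum_integral_of_nonneg
    (fun k => ((integrable_one_sub_pow_mul_rpow hC hC01 k (by positivity)).const_mul _).1)
    (fun k => ?_) (integrable_rpow hC hC01 (by positivity)) ?_
  · filter_upwards [hC01] with ω ⟨h0, h1⟩
    have : 0 ≤ 1 - C ω := by linarith
    have := (poch_pos (c := ((j + 1 : ℕ) : ℝ)) (by positivity) k).le
    positivity
  · filter_upwards [hC01] with ω ⟨h0, h1⟩
    simpa only [rpow_natCast, mul_assoc] using
      hasSum_poch_div_factorial_mul_one_sub_pow_mul_pow h0 (by linarith) m j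

end UnitInterval

lemma ae_pos_gammaMeasure (a r : ℝ) : ∀ᵐ x ∂gammaMeasure a r, 0 < x := by
  rw [gammaMeasure,
    ae_withDensity_iff (f := gammaPDF a r) (measurable_gammaPDFReal a r).ennreal_ofReal]
  filter_upwards [Measure.ae_ne volume 0] with x hx0 hpdf
  exact lt_of_le_of_ne (not_lt.1 fun hneg => hpdf (gammaPDF_of_neg hneg)) hx0.symm

lemma sum_div_sqrt_card_mul_sqrt_sum_sq_mem_Ioc {ι : Type*} [Fintype ι] [Nonempty ι]
    {x : ι → ℝ} (hx : ∀ i, 0 < x i) :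
    (∑ i, x i) / (√(Fintype.card ι) * √(∑ i, x i ^ 2)) ∈ Set.Ioc 0 1 := by
  have hsum : 0 < ∑ i, x i := sum_pos (fun i _ => hx i) univ_nonempty
  have hden : 0 < √(Fintype.card ι) * √(∑ i, x i ^ 2) := by
    have : 0 < ∑ i, x i ^ 2 := sum_pos (fun i _ => pow_pos (hx i) 2) univ_nonempty
    positivity
  refine ⟨div_pos hsum hden, (div_le_one hden).2 ?_⟩
  rw [← sqrt_mul (by positivity)]
  exact le_sqrt_of_sq_le (by simpa using sq_sum_le_card_mul_sum_sq (s := univ) (f := x))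

theorem stmt_8_general {Ω : Type*} [MeasurableSpace Ω] (μ : Measure Ω) [IsProbabilityMeasure μ]
    (n : ℕ)
    (X : Fin n → Ω → ℝ)
    (hlaw : ∀ i, Measure.map (X i) μ = gammaMeasure 1 1)
    (Y R C : Ω → ℝ)
    (hY : ∀ ω, Y ω = ∑ i, X i ω)
    (hR : ∀ ω, R ω = Real.sqrt (∑ i, (X i ω) ^ 2))
    (hC : ∀ ω, C ω = Y ω / (Real.sqrt n * R ω))
    (γ : ℝ → ℝ) (hγ : ∀ m : ℝ, γ m = ∫ ω, (C ω) ^ m ∂μ)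
    (p : ℕ → ℝ)
    (hp : ∀ k, p k = poch (n : ℝ) k / k.factorial *
      ∑ j ∈ Finset.range (k + 1), (-1 : ℝ) ^ j * (k.choose j) * γ ((n : ℝ) + j)) :
    (∀ m : ℕ, 2 ≤ m → m ≤ n →
      γ ((m : ℝ) - 1) = ∑' k : ℕ,
        ∑ i ∈ Finset.range (k + 1), (-1 : ℝ) ^ i * (k.choose i) * γ ((m : ℝ) + i)) ∧
    (∀ m : ℕ, 1 ≤ m → m ≤ n - 1 →
      γ (m : ℝ) = γ (n : ℝ) +
        ∑' k : ℕ, p (k + 1) * poch ((n : ℝ) - m) (k + 1) / poch (n : ℝ) (k + 1)) := by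
  rcases Nat.eq_zero_or_pos n with rfl | hn
  · exact ⟨fun m hm h0 => by omega, fun m hm h0 => by omega⟩
  have : Nonempty (Fin n) := ⟨⟨0, hn⟩⟩
  have hX (i : Fin n) : AEMeasurable (X i) μ := .of_map_ne_zero <| by
    rw [hlaw]; exact (isProbabilityMeasure_gammaMeasure one_pos one_pos).ne_zero
  have hCeq : C = fun ω => (∑ i, X i ω) / (√n * √(∑ i, X i ω ^ 2)) := by
    funext ω; rw [hC, hY, hR]
  have hCm : AEMeasurable C μ := by rw [hCeq]; fun_prop
  have hC01 : ∀ᵐ ω ∂μ, C ω ∈ Set.Ioc 0 1 := by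
    filter_upwards [ae_all_iff.2 fun i => ae_of_ae_map (hX i) (hlaw i ▸ ae_pos_gammaMeasure 1 1)]
      with ω hω
    simpa [hCeq] using sum_div_sqrt_card_mul_sqrt_sum_sq_mem_Ioc hω
  refine ⟨fun m hm2 _ => ?_, fun m hm1 hmn => ?_⟩
  · have h := hasSum_integral_one_sub_pow_mul_rpow hCm hC01 (r := m)
      (by exact_mod_cast hm2.trans' one_le_two)
    rw [hγ, ← h.tsum_eq]
    refine tsum_congr fun k => ?_
    simp only [integral_one_sub_pow_mul_rpow hCm hC01 k (Nat.cast_nonneg m), hγ]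
  · obtain ⟨j, rfl⟩ : ∃ j, n = m + j + 1 := ⟨n - m - 1, by omega⟩
    have h := hasSum_poch_div_factorial_mul_integral hCm hC01 m j
    rw [hγ, ← h.tsum_eq, h.summable.tsum_eq_zero_add]
    congr 1
    · simp [poch, hγ]
    refine tsum_congr fun k => ?_
    have hnm : ((m + j + 1 : ℕ) : ℝ) - m = ((j + 1 : ℕ) : ℝ) := by push_cast; ring
    have hpos := poch_pos (c := ((m + j + 1 : ℕ) : ℝ)) (by positivity) (k + 1)
    rw [hp, hnm, integral_one_sub_pow_mul_rpow hCm hC01 (k + 1) (Nat.cast_nonneg _)]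
    simp only [hγ]
    field_simp

/-- for i.i.d. exponential (Gamma(1,1)) variables, the "missing moments"
`γ_m`, `1 ≤ m ≤ n−1`, of `C = Y/(√n R)` satisfy
`γ_{m−1} = Σ_{k=0}^∞ (−Δ)^k γ_m` for `2 ≤ m ≤ n`, and equivalently
`γ_m = γ_n + Σ_{k=1}^∞ p_{1,n,k} (n−m)_k/(n)_k` for `1 ≤ m ≤ n−1`. -/
theorem stmt_8 {Ω : Type*} [MeasurableSpace Ω] (μ : Measure Ω) [IsProbabilityMeasure μ]
    (n : ℕ) (hn : 2 ≤ n)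
    (X : Fin n → Ω → ℝ) (hmeas : ∀ i, Measurable (X i))
    (hindep : iIndepFun X μ)
    (hlaw : ∀ i, Measure.map (X i) μ = gammaMeasure 1 1)
    (Y R C : Ω → ℝ)
    (hY : ∀ ω, Y ω = ∑ i, X i ω)
    (hR : ∀ ω, R ω = Real.sqrt (∑ i, (X i ω) ^ 2))
    (hC : ∀ ω, C ω = Y ω / (Real.sqrt n * R ω))
    (γ : ℝ → ℝ) (hγ : ∀ m : ℝ, γ m = ∫ ω, (C ω) ^ m ∂μ)
    (p : ℕ → ℝ)
    (hp : ∀ k, p k = poch (n : ℝ) k / k.factorial *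
      ∑ j ∈ Finset.range (k + 1), (-1 : ℝ) ^ j * (k.choose j) * γ ((n : ℝ) + j)) :
    (∀ m : ℕ, 2 ≤ m → m ≤ n →
      γ ((m : ℝ) - 1) = ∑' k : ℕ,
        ∑ i ∈ Finset.range (k + 1), (-1 : ℝ) ^ i * (k.choose i) * γ ((m : ℝ) + i)) ∧
    (∀ m : ℕ, 1 ≤ m → m ≤ n - 1 →
      γ (m : ℝ) = γ (n : ℝ) +
        ∑' k : ℕ, p (k + 1) * poch ((n : ℝ) - m) (k + 1) / poch (n : ℝ) (k + 1)) :=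
  stmt_8_general μ n X hlaw Y R C hY hR hC γ hγ p hp
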